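/- arXiv:1503.01036 — 7 statements merged into one kernel-verified Lean document; each statement's English description precedes it below -/
import Mathlib

section
/- Let X, Y be metric spaces, f: X → X and g: Y → Y maps. Equip X × Y with the maximum metric. Then for all δ > 0 and ν ∈ (0,1]: Sep(f×g, δ, ν) ≥ Sep(f,δ,ν) · Sep(g,δ,ν), where f×g denotes the product map (x,y) ↦ (f x, g y). -/
open Filter Metric Set

/-- `Sn f δ x y n` counts the times `0 ≤ k < n` with `dist (f^[k] x) (f^[k] y) ≥ δ`. -/
noncomputable def Sn {X : Type*} [PseudoMetricSpace X] (f : X → X) (δ : ℝ) (x y : X)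
    (n : ℕ) : ℕ :=
  Set.ncard {k : ℕ | k < n ∧ δ ≤ dist (f^[k] x) (f^[k] y)}

/-- asymptotic separation frequency `limsup_n S_n(f,δ,x,y)/n`. -/
noncomputable def sepFreq {X : Type*} [PseudoMetricSpace X] (f : X → X) (δ : ℝ) (x y : X) : ℝ :=
  Filter.limsup (fun n : ℕ => (Sn f δ x y n : ℝ) / n) Filter.atTop

/-- A set is `(f,δ,ν)`-separated if all pairs of distinct points are `(f,δ,ν)`-separated. -/
def IsSeparatedSet {X : Type*} [PseudoMetricSpace X] (f : X → X) (δ ν : ℝ) (S : Set X) : Prop :=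
  ∀ x ∈ S, ∀ y ∈ S, x ≠ y → ν ≤ sepFreq f δ x y

/-- A set is `(f,δ,ν)`-spanning if every point has a companion in it with separation
frequency `< ν`. -/
def IsSpanningSet {X : Type*} [PseudoMetricSpace X] (f : X → X) (δ ν : ℝ) (S : Set X) : Prop :=
  ∀ x : X, ∃ y ∈ S, sepFreq f δ x y < ν

/-- `SepNum f δ ν`: supremal cardinality of an `(f,δ,ν)`-separated set. -/
noncomputable def SepNum {X : Type*} [PseudoMetricSpace X] (f : X → X) (δ ν : ℝ) : ℕ∞ :=
  ⨆ (S : Set X) (_ : IsSeparatedSet f δ ν S), S.encard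

/-- `SpanNum f δ ν`: minimal cardinality of an `(f,δ,ν)`-spanning set. -/
noncomputable def SpanNum {X : Type*} [PseudoMetricSpace X] (f : X → X) (δ ν : ℝ) : ℕ∞ :=
  ⨅ (S : Set X) (_ : IsSpanningSet f δ ν S), S.encard

/-! Two distinct points of `S ×ˢ T` differ in some coordinate, and the maximum metric dominates
the distance in each coordinate, so their separation frequency is at least that of the
coordinate in which they differ. Hence products of separated sets are separated, and the bound
follows because multiplication on `ℕ∞` commutes with suprema. -/

section

variable {X Y : Type*} [PseudoMetricSpace X] [PseudoMetricSpace Y]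

lemma Sn_le (f : X → X) (δ : ℝ) (x y : X) (n : ℕ) : Sn f δ x y n ≤ n := by
  calc Sn f δ x y n ≤ (Set.Iio n).ncard :=
        Set.ncard_le_ncard (fun _ hk => hk.1) (Set.finite_Iio n)
    _ = n := by rw [← Finset.coe_range, Set.ncard_coe_finset, Finset.card_range]

lemma Sn_le_Sn_of_dist_le {f : X → X} {g : Y → Y} {δ : ℝ} {x x' : X} {y y' : Y}
    (h : ∀ k, dist (f^[k] x) (f^[k] x') ≤ dist (g^[k] y) (g^[k] y')) (n : ℕ) :
    Sn f δ x x' n ≤ Sn g δ y y' n :=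
  Set.ncard_le_ncard (fun k hk => ⟨hk.1, hk.2.trans (h k)⟩)
    ((Set.finite_Iio n).subset fun _ hk => hk.1)

lemma sepFreq_le_of_dist_le {f : X → X} {g : Y → Y} {δ : ℝ} {x x' : X} {y y' : Y}
    (h : ∀ k, dist (f^[k] x) (f^[k] x') ≤ dist (g^[k] y) (g^[k] y')) :
    sepFreq f δ x x' ≤ sepFreq g δ y y' := by
  refine Filter.limsup_le_limsup (Eventually.of_forall fun n => ?_) ?_ ?_
  · exact div_le_div_of_nonneg_right (by exact_mod_cast Sn_le_Sn_of_dist_le h n)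
      n.cast_nonneg
  · exact isCoboundedUnder_le_of_le atTop fun n => by positivity
  · exact isBoundedUnder_of ⟨1, fun n =>
      div_le_one_of_le₀ (by exact_mod_cast Sn_le g δ y y' n) n.cast_nonneg⟩

lemma sepFreq_le_sepFreq_prodMap_fst (f : X → X) (g : Y → Y) (δ : ℝ) (x x' : X) (y y' : Y) :
    sepFreq f δ x x' ≤ sepFreq (Prod.map f g) δ (x, y) (x', y') :=
  sepFreq_le_of_dist_le fun k => by
    rw [Prod.map_iterate, Prod.dist_eq]
    exact le_max_left _ _

lemma sepFreq_le_sepFreq_prodMap_snd (f : X → X) (g : Y → Y) (δ : ℝ) (x x' : X) (y y' : Y) :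
    sepFreq g δ y y' ≤ sepFreq (Prod.map f g) δ (x, y) (x', y') :=
  sepFreq_le_of_dist_le fun k => by
    rw [Prod.map_iterate, Prod.dist_eq]
    exact le_max_right _ _

lemma IsSeparatedSet.prod {f : X → X} {g : Y → Y} {δ ν : ℝ} {S : Set X} {T : Set Y}
    (hS : IsSeparatedSet f δ ν S) (hT : IsSeparatedSet g δ ν T) :
    IsSeparatedSet (Prod.map f g) δ ν (S ×ˢ T) := by
  rintro ⟨x, y⟩ ⟨hx, hy⟩ ⟨x', y'⟩ ⟨hx', hy'⟩ hne
  obtain rfl | hxx' := eq_or_ne x x'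
  · have hyy' : y ≠ y' := fun h => hne (h ▸ rfl)
    exact (hT y hy y' hy' hyy').trans (sepFreq_le_sepFreq_prodMap_snd f g δ x x y y')
  · exact (hS x hx x' hx' hxx').trans (sepFreq_le_sepFreq_prodMap_fst f g δ x x' y y')

end

theorem sepNum_prod_ge_general {X Y : Type*} [MetricSpace X] [MetricSpace Y]
    (f : X → X) (g : Y → Y) (δ ν : ℝ) :
    SepNum f δ ν * SepNum g δ ν ≤ SepNum (Prod.map f g) δ ν := by
  simp only [SepNum, ENat.iSup_mul]
  simp only [ENat.mul_iSup, ← Set.encard_prod]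
  exact iSup₂_le fun S hS => iSup₂_le fun T hT => le_iSup₂_of_le (S ×ˢ T) (hS.prod hT) le_rfl

/-- `Sep(f×g,δ,ν) ≥ Sep(f,δ,ν) · Sep(g,δ,ν)`, where `X × Y` carries the
maximum metric (the product metric in Mathlib). -/
theorem sepNum_prod_ge {X Y : Type*} [MetricSpace X] [MetricSpace Y]
    (f : X → X) (g : Y → Y) (δ ν : ℝ) (hδ : 0 < δ) (hν : ν ∈ Set.Ioc (0 : ℝ) 1) :
    SepNum f δ ν * SepNum g δ ν ≤ SepNum (Prod.map f g) δ ν :=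
  sepNum_prod_ge_general f g δ ν
end

section
/- Let X, Ξ be metric spaces, g: Ξ → Ξ a factor of f: X → X via a uniformly continuous surjective map h: X → Ξ satisfying h∘f = g∘h. Then for every δ > 0 there exists δ' > 0 such that for all ν ∈ (0,1]: Sep(f, δ', ν) ≥ Sep(g, δ, ν). -/
open Filter Metric Set

lemma Sn_le_Sn {X Ξ : Type*} [PseudoMetricSpace X] [PseudoMetricSpace Ξ]
    {f : X → X} {g : Ξ → Ξ} {h : X → Ξ} (hsemi : ∀ x, h (f x) = g (h x))
    {δ δ' : ℝ} (hδ : ∀ a b : X, δ ≤ dist (h a) (h b) → δ' ≤ dist a b)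
    (x y : X) (n : ℕ) : Sn g δ (h x) (h y) n ≤ Sn f δ' x y n := by
  have hiter : ∀ k : ℕ, ∀ a : X, h (f^[k] a) = g^[k] (h a) := by
    intro k
    induction k with
    | zero => intro a; simp
    | succ k ih =>
      intro a
      rw [Function.iterate_succ_apply, Function.iterate_succ_apply, ih, hsemi]
  apply Set.ncard_le_ncard
  · intro k hk
    obtain ⟨h1, h2⟩ := hk
    refine ⟨h1, hδ _ _ ?_⟩
    rwa [hiter, hiter]
  · exact (Set.finite_Iio n).subset (fun k hk => hk.1)

lemma sepFreq_le {X Ξ : Type*} [PseudoMetricSpace X] [PseudoMetricSpace Ξ]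
    {f : X → X} {g : Ξ → Ξ} {h : X → Ξ} (hsemi : ∀ x, h (f x) = g (h x))
    {δ δ' : ℝ} (hδ : ∀ a b : X, δ ≤ dist (h a) (h b) → δ' ≤ dist a b)
    (x y : X) : sepFreq g δ (h x) (h y) ≤ sepFreq f δ' x y := by
  have hb : ∀ (F : X → X) (d : ℝ) (a b : X) (n : ℕ), (Sn F d a b n : ℝ) / n ≤ 1 := by
    intro F d a b n
    rcases Nat.eq_zero_or_pos n with hn | hn
    · simp [hn]
    · rw [div_le_one (by exact_mod_cast hn)]
      have h1 : Sn F d a b n ≤ (Set.Iio n).ncard :=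
        Set.ncard_le_ncard (fun k hk => hk.1) (Set.finite_Iio n)
      have h2 : (Set.Iio n).ncard = n := by
        rw [Set.ncard_eq_toFinset_card']
        simp
      rw [h2] at h1
      exact_mod_cast h1
  apply Filter.limsup_le_limsup
  · filter_upwards with n
    rcases Nat.eq_zero_or_pos n with hn | hn
    · simp [hn]
    · have hc : (0:ℝ) < n := by exact_mod_cast hn
      have hle : (Sn g δ (h x) (h y) n : ℝ) ≤ Sn f δ' x y n := by
        exact_mod_cast Sn_le_Sn hsemi hδ x y n
      gcongr
  · exact Filter.isCoboundedUnder_le_of_le Filter.atTop (fun n => by positivity)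
  · exact ⟨1, Filter.eventually_map.2 (Filter.Eventually.of_forall fun n => hb f δ' x y n)⟩


/-- if `g` is a factor of `f` via a uniformly continuous surjection `h`,
then for every `δ > 0` there is `δ' > 0` with `Sep(f,δ',ν) ≥ Sep(g,δ,ν)` for all
`ν ∈ (0,1]`. -/
theorem sepNum_factor {X Ξ : Type*} [MetricSpace X] [MetricSpace Ξ]
    (f : X → X) (g : Ξ → Ξ) (h : X → Ξ)
    (hu : UniformContinuous h) (hs : Function.Surjective h)
    (hsemi : h ∘ f = g ∘ h) :
    ∀ δ > (0 : ℝ), ∃ δ' > (0 : ℝ), ∀ ν ∈ Set.Ioc (0 : ℝ) 1,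
      SepNum g δ ν ≤ SepNum f δ' ν := by
  intro δ hδpos
  obtain ⟨δ', hδ'pos, hδ'⟩ := Metric.uniformContinuous_iff.1 hu δ hδpos
  refine ⟨δ', hδ'pos, fun ν _ => ?_⟩
  have hsemi' : ∀ x, h (f x) = g (h x) := fun x => congrFun hsemi x
  have hkey : ∀ a b : X, δ ≤ dist (h a) (h b) → δ' ≤ dist a b := by
    intro a b hab
    by_contra hc
    exact absurd (hδ' (lt_of_not_ge hc)) (not_lt.2 hab)
  apply iSup₂_le
  intro S hS
  set e : Ξ → X := Function.surjInv hs with he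
  have heinj : Function.Injective e := Function.injective_surjInv hs
  have hhe : ∀ s, h (e s) = s := fun s => Function.surjInv_eq hs s
  have hT : IsSeparatedSet f δ' ν (e '' S) := by
    rintro x ⟨s, hsS, rfl⟩ y ⟨t, htS, rfl⟩ hxy
    have hst : s ≠ t := fun hs' => hxy (by rw [hs'])
    calc ν ≤ sepFreq g δ s t := hS s hsS t htS hst
    _ = sepFreq g δ (h (e s)) (h (e t)) := by rw [hhe, hhe]
    _ ≤ sepFreq f δ' (e s) (e t) := sepFreq_le hsemi' hkey (e s) (e t)
  calc S.encard = (e '' S).encard := (Set.InjOn.encard_image (heinj.injOn)).symm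
  _ ≤ SepNum f δ' ν := le_iSup₂ (f := fun (T : Set X) (_ : IsSeparatedSet f δ' ν T) => T.encard) (e '' S) hT
end

section
/- Let (X,d) be a metric space, f: X → X measurable, and μ an f-invariant Borel probability measure that is weak-mixing and whose support is not a single point. Then for suitable δ, ν > 0 and every m ∈ ℕ there exist m points in X that are pairwise (f,δ,ν)-separated; in particular f has infinite separation numbers. -/
open Filter Metric Set

open MeasureTheory

/-! Choose `a ≠ b` in the support of `μ` and balls `E ∋ a`, `F ∋ b` whose points are `δ`-apart.
For `μ^m`-a.e. `x`, ergodicity of `f × ⋯ × f` makes the orbit of `x` visit each box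
`{y | y i ∈ E ∧ y j ∈ F}` (`i ≠ j`) with upper frequency at least its measure `μ E * μ F`, and at
every such visit `f^[k] (x i)` and `f^[k] (x j)` are `δ`-apart. The coordinates of such an `x`
are therefore pairwise `(f, δ, μ E * μ F)`-separated. -/

open scoped ENNReal
open ProbabilityTheory Topology

namespace ENNReal

lemma limsup_div_natCast_le_of_le_add {u v : ℕ → ℝ≥0∞} {C : ℝ≥0∞} (hC : C ≠ ∞)
    (h : ∀ n, u n ≤ v n + C) :
    limsup (fun n : ℕ => u n / n) atTop ≤ limsup (fun n : ℕ => v n / n) atTop := by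
  have hCn : Tendsto (fun n : ℕ => C / n) atTop (𝓝 0) := by
    simpa [div_eq_mul_inv] using
      ENNReal.Tendsto.const_mul ENNReal.tendsto_inv_nat_nhds_zero (Or.inr hC)
  calc limsup (fun n : ℕ => u n / n) atTop
      ≤ limsup ((fun n : ℕ => v n / n) + fun n : ℕ => C / n) atTop :=
        limsup_le_limsup (.of_forall fun n => by
          simpa only [Pi.add_apply, ENNReal.add_div] using ENNReal.div_le_div_right (h n) _)
    _ = limsup (fun n : ℕ => v n / n) atTop := limsup_add_of_right_tendsto_zero hCn _

end ENNReal

section BirkhoffFrequency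

variable {α : Type*} {f : α → α} {g : α → ℝ≥0∞} {C : ℝ≥0∞}

lemma birkhoffSum_apply_le_add (hg : ∀ x, g x ≤ C) (n : ℕ) (x : α) :
    birkhoffSum f g n (f x) ≤ birkhoffSum f g n x + C :=
  calc birkhoffSum f g n (f x) ≤ g x + birkhoffSum f g n (f x) := le_add_self
    _ = birkhoffSum f g n x + g (f^[n] x) := by rw [← birkhoffSum_succ', birkhoffSum_succ]
    _ ≤ birkhoffSum f g n x + C := by gcongr; exact hg _

lemma birkhoffSum_le_apply_add (hg : ∀ x, g x ≤ C) (n : ℕ) (x : α) :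
    birkhoffSum f g n x ≤ birkhoffSum f g n (f x) + C :=
  calc birkhoffSum f g n x ≤ birkhoffSum f g n x + g (f^[n] x) := le_self_add
    _ = birkhoffSum f g n (f x) + g x := by rw [← birkhoffSum_succ, birkhoffSum_succ', add_comm]
    _ ≤ birkhoffSum f g n (f x) + C := by gcongr; exact hg _

lemma birkhoffSum_le_mul (hg : ∀ x, g x ≤ C) (n : ℕ) (x : α) :
    birkhoffSum f g n x ≤ C * n :=
  calc birkhoffSum f g n x ≤ ∑ _k ∈ Finset.range n, C := Finset.sum_le_sum fun k _ => hg _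
    _ = C * n := by simp [mul_comm]

lemma limsup_birkhoffSum_div_apply (hg : ∀ x, g x ≤ C) (hC : C ≠ ∞) (x : α) :
    limsup (fun n : ℕ => birkhoffSum f g n (f x) / n) atTop =
      limsup (fun n : ℕ => birkhoffSum f g n x / n) atTop :=
  le_antisymm (ENNReal.limsup_div_natCast_le_of_le_add hC (birkhoffSum_apply_le_add hg · x))
    (ENNReal.limsup_div_natCast_le_of_le_add hC (birkhoffSum_le_apply_add hg · x))

variable [MeasurableSpace α] {μ : Measure α}

lemma Measurable.birkhoffSum (hf : Measurable f) (hg : Measurable g) (n : ℕ) :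
    Measurable (birkhoffSum f g n) :=
  Finset.measurable_sum _ fun k _ => hg.comp (hf.iterate k)

lemma MeasureTheory.MeasurePreserving.lintegral_birkhoffSum (hf : MeasurePreserving f μ μ)
    (hg : Measurable g) (n : ℕ) : ∫⁻ x, birkhoffSum f g n x ∂μ = n * ∫⁻ x, g x ∂μ := by
  simp only [birkhoffSum]
  rw [lintegral_finsetSum (f := fun k x => g (f^[k] x)) _
    fun k _ => hg.comp (hf.measurable.iterate k)]
  simp [(hf.iterate _).lintegral_comp hg]

/-- The `f`-invariant function `limsup_n (1/n) ∑_{k<n} g ∘ f^[k]` is a.e. constant by ergodicity,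
and the reverse Fatou lemma bounds that constant below by `∫ g`. -/
theorem Ergodic.ae_lintegral_le_limsup_birkhoffSum_div [IsProbabilityMeasure μ]
    (hf : Ergodic f μ) (hg : Measurable g) (hgC : ∀ x, g x ≤ C) (hC : C ≠ ∞) :
    ∀ᵐ x ∂μ, ∫⁻ y, g y ∂μ ≤ limsup (fun n : ℕ => birkhoffSum f g n x / n) atTop := by
  have hmeas (n : ℕ) : Measurable fun x => birkhoffSum f g n x / n :=
    (hf.measurable.birkhoffSum hg n).div_const _
  obtain ⟨c, hc⟩ := hf.toPreErgodic.ae_eq_const_of_ae_eq_comp (Measurable.limsup hmeas)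
    (funext (limsup_birkhoffSum_div_apply hgC hC))
  have hmean : ∀ᶠ n : ℕ in atTop, ∫⁻ x, birkhoffSum f g n x / n ∂μ = ∫⁻ y, g y ∂μ := by
    filter_upwards [eventually_ne_atTop 0] with n hn
    simp_rw [div_eq_mul_inv]
    rw [lintegral_mul_const _ (hf.measurable.birkhoffSum hg n), ← div_eq_mul_inv,
      hf.toMeasurePreserving.lintegral_birkhoffSum hg, mul_comm,
      ENNReal.mul_div_cancel_right (by exact_mod_cast hn) (ENNReal.natCast_ne_top n)]
  have hle : ∫⁻ y, g y ∂μ ≤ c :=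
    calc ∫⁻ y, g y ∂μ = limsup (fun n : ℕ => ∫⁻ x, birkhoffSum f g n x / n ∂μ) atTop :=
          (tendsto_const_nhds.congr' (hmean.mono fun _ h => h.symm)).limsup_eq.symm
      _ ≤ ∫⁻ x, limsup (fun n : ℕ => birkhoffSum f g n x / n) atTop ∂μ :=
          limsup_lintegral_le (fun _ => C) hmeas
            (fun n => .of_forall fun x => ENNReal.div_le_of_le_mul (birkhoffSum_le_mul hgC n x))
            (by simpa using hC)
      _ = c := by simp [lintegral_congr_ae hc]
  filter_upwards [hc] with x hx
  exact hx ▸ hle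

end BirkhoffFrequency

lemma MeasureTheory.Measure.pi_setOf_mem_and_mem {ι X : Type*} [Fintype ι] [MeasurableSpace X]
    (μ : Measure X) [IsProbabilityMeasure μ] {E F : Set X} (hE : MeasurableSet E)
    (hF : MeasurableSet F) {i j : ι} (hij : i ≠ j) :
    Measure.pi (fun _ => μ) {y | y i ∈ E ∧ y j ∈ F} = μ E * μ F := by
  have hindep : IndepFun (fun y : ι → X => y i) (fun y => y j) (Measure.pi fun _ => μ) :=
    (iIndepFun_pi (X := fun _ => id) fun _ => aemeasurable_id).indepFun hij
  rw [← (measurePreserving_eval (fun _ => μ) i).measure_preimage hE.nullMeasurableSet,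
    ← (measurePreserving_eval (fun _ => μ) j).measure_preimage hF.nullMeasurableSet,
    ← hindep.measure_inter_preimage_eq_mul _ _ hE hF]
  rfl

section Separation

variable {X : Type*} [PseudoMetricSpace X] (f : X → X) (δ : ℝ)

lemma Sn_eq_card (x y : X) (n : ℕ) :
    Sn f δ x y n = ((Finset.range n).filter fun k => δ ≤ dist (f^[k] x) (f^[k] y)).card := by
  rw [Sn, ← Set.ncard_coe_finset]
  congr 1
  ext k
  simp

lemma Sn_div_mem_Icc (x y : X) (n : ℕ) : (Sn f δ x y n : ℝ) / n ∈ Icc 0 1 := by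
  refine ⟨by positivity, div_le_one_of_le₀ ?_ n.cast_nonneg⟩
  exact_mod_cast (Sn_eq_card f δ x y n).trans_le
    ((Finset.card_filter_le _ _).trans_eq (Finset.card_range n))

lemma sepFreq_nonneg (x y : X) : 0 ≤ sepFreq f δ x y :=
  le_limsup_of_frequently_le (.of_forall fun n => (Sn_div_mem_Icc f δ x y n).1)
    (isBoundedUnder_of ⟨1, fun n => (Sn_div_mem_Icc f δ x y n).2⟩)

lemma ofReal_sepFreq (x y : X) :
    ENNReal.ofReal (sepFreq f δ x y) = limsup (fun n : ℕ => (Sn f δ x y n : ℝ≥0∞) / n) atTop := by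
  rw [sepFreq, ENNReal.ofReal_mono.map_limsup_of_continuousAt _
    ENNReal.continuous_ofReal.continuousAt
    (isBoundedUnder_of ⟨1, fun n => (Sn_div_mem_Icc f δ x y n).2⟩)
    (isBoundedUnder_of ⟨0, fun n => (Sn_div_mem_Icc f δ x y n).1⟩).isCoboundedUnder_flip]
  congr! 2 with n
  rcases n.eq_zero_or_pos with rfl | hn
  · simp [Sn_eq_card]
  · rw [Function.comp_apply, ENNReal.ofReal_div_of_pos (by positivity)]
    simp

lemma sepFreq_self (hδ : 0 < δ) (x : X) : sepFreq f δ x x = 0 := by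
  simp [sepFreq, Sn_eq_card, not_le.2 hδ]

lemma birkhoffSum_indicator_le_Sn {ι : Type*} {E F : Set X}
    (hEF : ∀ u ∈ E, ∀ v ∈ F, δ ≤ dist u v) (x : ι → X) (i j : ι) (n : ℕ) :
    birkhoffSum (Pi.map fun _ => f) ({y | y i ∈ E ∧ y j ∈ F}.indicator (1 : (ι → X) → ℝ≥0∞)) n x
      ≤ (Sn f δ (x i) (x j) n : ℝ≥0∞) := by
  rw [Sn_eq_card, Finset.card_filter, Nat.cast_sum, birkhoffSum]
  refine Finset.sum_le_sum fun k _ => ?_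
  rw [Pi.map_iterate]
  by_cases hk : δ ≤ dist (f^[k] (x i)) (f^[k] (x j))
  · simp only [hk, ite_true, Nat.cast_one]
    exact Set.indicator_le (fun _ _ => le_rfl) _
  · have hout : Pi.map (fun _ => f^[k]) x ∉ {y | y i ∈ E ∧ y j ∈ F} :=
      fun ⟨hi, hj⟩ => hk (hEF _ hi _ hj)
    simp [hk, hout]

theorem exists_pairwise_le_sepFreq_of_ergodic {ι : Type*} [Fintype ι] [MeasurableSpace X]
    {μ : Measure X} [IsProbabilityMeasure μ]
    (hf : Ergodic (Pi.map fun _ : ι => f) (Measure.pi fun _ => μ)) {E F : Set X}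
    (hE : MeasurableSet E) (hF : MeasurableSet F) (hEF : ∀ u ∈ E, ∀ v ∈ F, δ ≤ dist u v) :
    ∃ x : ι → X, ∀ i j, i ≠ j → (μ E * μ F).toReal ≤ sepFreq f δ (x i) (x j) := by
  have hfreq : ∀ᵐ x ∂(Measure.pi fun _ => μ), ∀ i j, i ≠ j → μ E * μ F ≤
      limsup (fun n : ℕ => birkhoffSum (Pi.map fun _ => f)
        ({y | y i ∈ E ∧ y j ∈ F}.indicator (1 : (ι → X) → ℝ≥0∞)) n x / n) atTop := by
    refine ae_all_iff.2 fun i => ae_all_iff.2 fun j => ?_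
    have hbox : MeasurableSet {y : ι → X | y i ∈ E ∧ y j ∈ F} :=
      (measurable_pi_apply i hE).inter (measurable_pi_apply j hF)
    filter_upwards [hf.ae_lintegral_le_limsup_birkhoffSum_div (measurable_one.indicator hbox)
      (Set.indicator_le fun _ _ => le_rfl) ENNReal.one_ne_top] with x hx hij
    rwa [lintegral_indicator_one hbox, Measure.pi_setOf_mem_and_mem μ hE hF hij] at hx
  obtain ⟨x, hx⟩ := hfreq.exists
  refine ⟨x, fun i j hij => ENNReal.toReal_le_of_le_ofReal (sepFreq_nonneg f δ _ _) ?_⟩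
  rw [ofReal_sepFreq]
  exact (hx i j hij).trans <| limsup_le_limsup <| .of_forall fun n =>
    ENNReal.div_le_div_right (birkhoffSum_indicator_le_Sn f δ hEF x i j n) _

end Separation

lemma exists_finset_card_eq_of_pairwise {α ι : Type*} [Fintype ι] {P : α → α → Prop}
    (hP : ∀ a, ¬ P a a) {x : ι → α} (hx : ∀ i j, i ≠ j → P (x i) (x j)) {m : ℕ}
    (hm : m ≤ Fintype.card ι) :
    ∃ S : Finset α, S.card = m ∧ ∀ u ∈ S, ∀ v ∈ S, u ≠ v → P u v := by
  classical
  have hinj : Function.Injective x := fun i j hxij => by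
    by_contra hij
    exact hP _ (hxij ▸ hx i j hij)
  obtain ⟨S, hS, hcard⟩ := (Finset.univ.image x).exists_subset_card_eq
    (hm.trans_eq (Finset.card_image_of_injective _ hinj).symm)
  refine ⟨S, hcard, fun u hu v hv huv => ?_⟩
  obtain ⟨i, -, rfl⟩ := Finset.mem_image.1 (hS hu)
  obtain ⟨j, -, rfl⟩ := Finset.mem_image.1 (hS hv)
  exact hx i j fun hij => huv (congrArg x hij)

theorem infinite_separation_of_weak_mixing_general {X : Type*} [MetricSpace X]
    [MeasurableSpace X] [BorelSpace X] (f : X → X)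
    (μ : Measure X) [IsProbabilityMeasure μ]
    (hwm : ∀ m : ℕ, 2 ≤ m →
      Ergodic (fun x : Fin m → X => fun i => f (x i)) (Measure.pi fun _ => μ))
    (hsupp : ∃ a b : X, a ≠ b ∧ (∀ ε > (0 : ℝ), 0 < μ (Metric.ball a ε)) ∧
      (∀ ε > (0 : ℝ), 0 < μ (Metric.ball b ε))) :
    ∃ δ > (0 : ℝ), ∃ ν > (0 : ℝ), ∀ m : ℕ, ∃ S : Finset X,
      S.card = m ∧ ∀ x ∈ S, ∀ y ∈ S, x ≠ y → ν ≤ sepFreq f δ x y := by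
  obtain ⟨a, b, hab, ha, hb⟩ := hsupp
  set r := dist a b / 4 with hr_def
  have hr : 0 < r := by have := dist_pos.2 hab; positivity
  have hsep : ∀ u ∈ ball a r, ∀ v ∈ ball b r, 2 * r ≤ dist u v := fun u hu v hv => by
    linarith [hr_def, dist_triangle4 a u v b, mem_ball'.1 hu, mem_ball.1 hv]
  set ν := (μ (ball a r) * μ (ball b r)).toReal
  have hν : 0 < ν := ENNReal.toReal_pos (mul_ne_zero (ha r hr).ne' (hb r hr).ne') (by finiteness)
  refine ⟨2 * r, by positivity, ν, hν, fun m => ?_⟩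
  obtain ⟨x, hx⟩ := exists_pairwise_le_sepFreq_of_ergodic f (2 * r) (hwm (m + 2) (by omega))
    measurableSet_ball measurableSet_ball hsep
  exact exists_finset_card_eq_of_pairwise
    (fun z hz => (hz.trans_eq (sepFreq_self f (2 * r) (by positivity) z)).not_gt hν) hx (by simp)

/-- if `f` preserves a weak-mixing Borel probability measure `μ`
(weak mixing phrased via ergodicity of all finite products) whose support is not a
single point, then for suitable `δ, ν > 0` and every `m` there are `m` points that
are pairwise `(f,δ,ν)`-separated; in particular `f` has infinite separation numbers. -/
theorem infinite_separation_of_weak_mixing {X : Type*} [MetricSpace X]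
    [MeasurableSpace X] [BorelSpace X] (f : X → X) (hf : Measurable f)
    (μ : Measure X) [IsProbabilityMeasure μ] (hinv : MeasurePreserving f μ μ)
    (hwm : ∀ m : ℕ, 2 ≤ m →
      Ergodic (fun x : Fin m → X => fun i => f (x i)) (Measure.pi fun _ => μ))
    (hsupp : ∃ a b : X, a ≠ b ∧ (∀ ε > (0 : ℝ), 0 < μ (Metric.ball a ε)) ∧
      (∀ ε > (0 : ℝ), 0 < μ (Metric.ball b ε))) :
    ∃ δ > (0 : ℝ), ∃ ν > (0 : ℝ), ∀ m : ℕ, ∃ S : Finset X,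
      S.card = m ∧ ∀ x ∈ S, ∀ y ∈ S, x ≠ y → ν ≤ sepFreq f δ x y :=
  infinite_separation_of_weak_mixing_general f μ hwm hsupp
end

section
/- Let X, Ξ be compact metric spaces and h: X → Ξ a continuous surjection. For δ > 0 set E_δ := h({x ∈ X : diam(h⁻¹(h(x))) ≥ δ}). Then for all δ > 0 and ε > 0 there exists η > 0 such that: whenever x, y ∈ X satisfy d(x,y) ≥ δ and ρ(h(x), h(y)) < η, both h(x) and h(y) lie in the open ε-neighbourhood of E_δ. -/
open Metric

/-- with `E_δ = h(F_δ)`, for all `δ, ε > 0` there is `η > 0` such that if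
`d(x,y) ≥ δ` and `ρ(h x, h y) < η`, then `h x` and `h y` lie in the open
`ε`-neighbourhood of `E_δ`. -/
theorem eta_function {X Ξ : Type*} [MetricSpace X] [CompactSpace X]
    [MetricSpace Ξ] [CompactSpace Ξ] (h : X → Ξ) (hc : Continuous h)
    (hs : Function.Surjective h) :
    ∀ δ > (0 : ℝ), ∀ ε > (0 : ℝ), ∃ η > (0 : ℝ), ∀ x y : X,
      δ ≤ dist x y → dist (h x) (h y) < η →
        h x ∈ Metric.thickening ε (h '' {x : X | δ ≤ Metric.diam (h ⁻¹' {h x})}) ∧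
        h y ∈ Metric.thickening ε (h '' {x : X | δ ≤ Metric.diam (h ⁻¹' {h x})}) := by
  intro δ hδ ε hε
  set E : Set Ξ := h '' {x : X | δ ≤ Metric.diam (h ⁻¹' {h x})} with hE
  -- key claim
  have key : ∃ η > (0:ℝ), ∀ x y : X, δ ≤ dist x y →
      dist (h x) (h y) < η → h x ∈ Metric.thickening ε E := by
    set K : Set (X × X) :=
      {p : X × X | δ ≤ dist p.1 p.2} ∩ {p : X × X | h p.1 ∉ Metric.thickening ε E} with hK
    have hKc : IsClosed K := by
      apply IsClosed.inter
      · exact isClosed_le continuous_const (continuous_fst.dist continuous_snd)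
      · exact (isOpen_thickening.preimage (hc.comp continuous_fst)).isClosed_compl
    have hpos : ∀ p ∈ K, 0 < dist (h p.1) (h p.2) := by
      rintro ⟨x, y⟩ ⟨h1, h2⟩
      rcases lt_or_eq_of_le (dist_nonneg (x := h x) (y := h y)) with hlt | heq
      · exact hlt
      · exfalso
        have hxy : h x = h y := by
          have := heq.symm
          rwa [dist_eq_zero] at this
        have hxmem : x ∈ h ⁻¹' {h x} := by simp
        have hymem : y ∈ h ⁻¹' {h x} := by simp [hxy]
        have hb : Bornology.IsBounded (h ⁻¹' {h x}) :=
          (isCompact_univ.of_isClosed_subset (isClosed_singleton.preimage hc)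
            (Set.subset_univ _)).isBounded
        have hdiam : δ ≤ Metric.diam (h ⁻¹' {h x}) :=
          le_trans h1 (Metric.dist_le_diam_of_mem hb hxmem hymem)
        exact h2 (Metric.self_subset_thickening hε E ⟨x, hdiam, rfl⟩)
    rcases K.eq_empty_or_nonempty with hKe | hKne
    · refine ⟨1, one_pos, fun x y h1 h2 => ?_⟩
      by_contra hcon
      have : (x, y) ∈ K := ⟨h1, hcon⟩
      simp [hKe] at this
    · have hcomp : IsCompact K := hKc.isCompact
      obtain ⟨p0, hp0K, hp0min⟩ := hcomp.exists_isMinOn hKne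
        ((hc.comp continuous_fst).dist (hc.comp continuous_snd)).continuousOn
      refine ⟨dist (h p0.1) (h p0.2), hpos p0 hp0K, fun x y h1 h2 => ?_⟩
      by_contra hcon
      have hmem : (x, y) ∈ K := ⟨h1, hcon⟩
      have := hp0min hmem
      simp only [Function.comp] at this
      exact absurd h2 (not_lt.mpr this)
  obtain ⟨η, hη, hkey⟩ := key
  refine ⟨η, hη, fun x y h1 h2 => ⟨hkey x y h1 h2, ?_⟩⟩
  exact hkey y x (by rwa [dist_comm] at h1) (by rwa [dist_comm] at h2)
end

section
/- Let Ξ be a compact metric space, g: Ξ → Ξ continuous, and A ⊆ Ξ a closed set with μ(A) < ν for every g-invariant Borel probability measure μ. Then for every ξ ∈ Ξ: limsup_{n→∞} (1/n)·#{0 ≤ k < n : g^k(ξ) ∈ A} < ν. -/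
/-!
Suppose some orbit visits `A` with upper frequency at least `ν`. Along an ultrafilter realising
that limsup, the empirical measures `(1/n) ∑_{k<n} δ_{g^k ξ}` converge weakly, by compactness of
the space of measures of mass at most one. The limit is a probability measure, it is
`g`-invariant because the averages of `φ ∘ g` and of `φ` differ by `O(1/n)`, and by the
Portmanteau theorem it gives the closed set `A` mass at least `ν`, contradicting the hypothesis.
-/

open MeasureTheory Filter Topology BoundedContinuousFunction
open scoped NNReal ENNReal

theorem Filter.exists_ultrafilter_le_tendsto_limsup {α β : Type*}
    [ConditionallyCompleteLinearOrder α] [TopologicalSpace α] [OrderTopology α]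
    {f : Filter β} [NeBot f] {u : β → α}
    (hc : IsCoboundedUnder (· ≤ ·) f u := by isBoundedDefault)
    (hb : IsBoundedUnder (· ≤ ·) f u := by isBoundedDefault) :
    ∃ U : Ultrafilter β, ↑U ≤ f ∧ Tendsto u U (𝓝 (limsup u f)) :=
  mapClusterPt_iff_ultrafilter.1 (isGreatest_mapClusterPt_limsup hc hb).1

section VisitFrequency

variable {α : Type*} (f : α → α) (s : Set α) (x : α) (n : ℕ)

noncomputable def visitFrequency : ℝ :=
  (Set.ncard {k : ℕ | k < n ∧ f^[k] x ∈ s} : ℝ) / n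

lemma visitFrequency_nonneg : 0 ≤ visitFrequency f s x n := by
  unfold visitFrequency
  positivity

lemma visitFrequency_le_one : visitFrequency f s x n ≤ 1 := by
  refine div_le_one_of_le₀ ?_ n.cast_nonneg
  have : {k : ℕ | k < n ∧ f^[k] x ∈ s}.ncard ≤ (Set.Iio n).ncard :=
    Set.ncard_le_ncard (fun k hk ↦ hk.1) (Set.finite_Iio n)
  exact_mod_cast this.trans_eq (Set.ncard_Iio_nat n)

end VisitFrequency

section OrbitMeasure

variable {α : Type*} [MeasurableSpace α]

noncomputable def orbitMeasure (f : α → α) (x : α) (n : ℕ) : FiniteMeasure α :=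
  birkhoffAverage ℝ≥0 f (fun y ↦ ⟨Measure.dirac y, inferInstance⟩) n x

variable (f : α → α) (x : α) (n : ℕ)

lemma toMeasure_orbitMeasure :
    (orbitMeasure f x n : Measure α) = birkhoffAverage ℝ≥0 f Measure.dirac n x :=
  map_birkhoffAverage ℝ≥0 ℝ≥0 FiniteMeasure.toMeasureAddMonoidHom f _ n x

open Classical in
lemma orbitMeasure_apply {s : Set α} (hs : MeasurableSet s) :
    (orbitMeasure f x n : Measure α) s = ENNReal.ofReal (visitFrequency f s x n) := by
  have hcard : {k : ℕ | k < n ∧ f^[k] x ∈ s}.ncard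
      = ((Finset.range n).filter (f^[·] x ∈ s)).card := by
    rw [← Set.ncard_coe_finset]
    congr
    ext
    simp
  rw [toMeasure_orbitMeasure, birkhoffAverage, birkhoffSum, visitFrequency, hcard]
  simp only [Measure.smul_apply, Measure.coe_finsetSum, Finset.sum_apply,
    Measure.dirac_apply' _ hs, Set.indicator_apply, Pi.one_apply, Finset.sum_boole]
  rw [ENNReal.smul_def, smul_eq_mul, ← ENNReal.coe_natCast, ← ENNReal.coe_mul,
    ← ENNReal.ofReal_coe_nnreal]
  simp [div_eq_inv_mul]

lemma mass_orbitMeasure : (orbitMeasure f x n).mass = (n : ℝ≥0) / n := by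
  have hfreq : visitFrequency f Set.univ x n = (((n : ℝ≥0) / n : ℝ≥0) : ℝ) := by
    simp only [visitFrequency, Set.mem_univ, and_true]
    rw [show {k : ℕ | k < n} = Set.Iio n from rfl, Set.ncard_Iio_nat]
    push_cast
    rfl
  apply ENNReal.coe_injective
  rw [FiniteMeasure.ennreal_mass, orbitMeasure_apply f x n MeasurableSet.univ, hfreq,
    ENNReal.ofReal_coe_nnreal]

lemma integral_orbitMeasure [TopologicalSpace α] [OpensMeasurableSpace α] (φ : α →ᵇ ℝ) :
    ∫ y, φ y ∂(orbitMeasure f x n : Measure α) = birkhoffAverage ℝ f φ n x := by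
  rw [toMeasure_orbitMeasure, birkhoffAverage, birkhoffSum, birkhoffAverage, birkhoffSum,
    integral_smul_nnreal_measure, integral_finsetSum_measure fun _ _ ↦ φ.integrable _]
  simp [integral_dirac' _ _ φ.continuous.stronglyMeasurable, NNReal.smul_def]

variable [TopologicalSpace α] {f x}

lemma exists_tendsto_orbitMeasure [T2Space α] [BorelSpace α] [CompactSpace α]
    (U : Ultrafilter ℕ) : ∃ μ : FiniteMeasure α, Tendsto (orbitMeasure f x) U (𝓝 μ) := by
  obtain ⟨μ, -, hμ⟩ :=
    (isCompact_setOfPred_finiteMeasure_le_of_compactSpace α 1).ultrafilter_le_nhds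
      (U.map (orbitMeasure f x)) (by simp [mass_orbitMeasure, div_self_le_one])
  exact ⟨μ, hμ⟩

variable [OpensMeasurableSpace α] {l : Filter ℕ} [NeBot l] {μ : FiniteMeasure α}

lemma isProbabilityMeasure_of_tendsto_orbitMeasure (hl : l ≤ atTop)
    (hμ : Tendsto (orbitMeasure f x) l (𝓝 μ)) : IsProbabilityMeasure (μ : Measure α) := by
  have hmass : μ.mass = 1 := by
    refine tendsto_nhds_unique ((FiniteMeasure.continuous_mass.tendsto μ).comp hμ)
      (tendsto_const_nhds.congr' ?_)
    filter_upwards [hl (eventually_ne_atTop 0)] with n hn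
    simp [mass_orbitMeasure, hn]
  exact ⟨by rw [← FiniteMeasure.ennreal_mass, hmass, ENNReal.coe_one]⟩

lemma measurePreserving_of_tendsto_orbitMeasure [HasOuterApproxClosed α] [BorelSpace α]
    (hf : Continuous f) (hl : l ≤ atTop) (hμ : Tendsto (orbitMeasure f x) l (𝓝 μ)) :
    MeasurePreserving f μ μ := by
  refine ⟨hf.measurable, ext_of_forall_integral_eq_of_IsFiniteMeasure fun φ ↦ ?_⟩
  have hlim := FiniteMeasure.tendsto_iff_forall_integral_tendsto.1 hμ
  have hcomp := hlim (φ.compContinuous ⟨f, hf⟩)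
  simp only [integral_orbitMeasure] at hlim hcomp
  have hshift (n : ℕ) : birkhoffAverage ℝ f (φ ∘ f) n x = birkhoffAverage ℝ f φ n (f x) := by
    simp only [birkhoffAverage, birkhoffSum, Function.comp_apply,
      ← Function.iterate_succ_apply' f, Function.iterate_succ_apply]
  have hdiff : Tendsto (fun n ↦ birkhoffAverage ℝ f φ n (f x) - birkhoffAverage ℝ f φ n x) l
      (𝓝 0) :=
    (tendsto_birkhoffAverage_apply_sub_birkhoffAverage' ℝ φ.isBounded_range f x).mono_left hl
  rw [integral_map hf.aemeasurable φ.continuous.aestronglyMeasurable]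
  refine tendsto_nhds_unique (hcomp.congr hshift) ?_
  simpa using (hlim φ).add hdiff

end OrbitMeasure

theorem visit_frequency_lt_general {Ξ : Type*} [MetricSpace Ξ] [CompactSpace Ξ]
    [MeasurableSpace Ξ] [BorelSpace Ξ] (g : Ξ → Ξ) (hg : Continuous g)
    (A : Set Ξ) (hA : IsClosed A) (ν : ℝ)
    (hmeas : ∀ μ : Measure Ξ, IsProbabilityMeasure μ → MeasurePreserving g μ μ →
      μ A < ENNReal.ofReal ν) :
    ∀ ξ : Ξ, Filter.limsup
      (fun n : ℕ => (Set.ncard {k : ℕ | k < n ∧ g^[k] ξ ∈ A} : ℝ) / n)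
      Filter.atTop < ν := by
  intro ξ
  change limsup (visitFrequency g A ξ) atTop < ν
  by_contra! hge
  obtain ⟨U, hU, hfreq⟩ := exists_ultrafilter_le_tendsto_limsup
    (isCoboundedUnder_le_of_le atTop (visitFrequency_nonneg g A ξ))
    (isBoundedUnder_of ⟨1, visitFrequency_le_one g A ξ⟩)
  obtain ⟨μ, hμ⟩ := exists_tendsto_orbitMeasure (f := g) (x := ξ) U
  have hprob := isProbabilityMeasure_of_tendsto_orbitMeasure hU hμ
  refine (hmeas μ hprob (measurePreserving_of_tendsto_orbitMeasure hg hU hμ)).not_ge ?_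
  calc ENNReal.ofReal ν
      ≤ ENNReal.ofReal (limsup (visitFrequency g A ξ) atTop) := ENNReal.ofReal_le_ofReal hge
    _ = limsup (fun n ↦ (orbitMeasure g ξ n : Measure Ξ) A) U := by
      simp_rw [orbitMeasure_apply g ξ _ hA.measurableSet]
      exact ((ENNReal.continuous_ofReal.tendsto _).comp hfreq).limsup_eq.symm
    _ ≤ (μ : Measure Ξ) A := FiniteMeasure.limsup_measure_closed_le_of_tendsto hμ hA

/-- if `A` is a closed subset of a compact metric space with `μ(A) < ν`
for all `g`-invariant Borel probability measures `μ`, then the upper visit frequency of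
every orbit to `A` is `< ν`. -/
theorem visit_frequency_lt {Ξ : Type*} [MetricSpace Ξ] [CompactSpace Ξ]
    [MeasurableSpace Ξ] [BorelSpace Ξ] (g : Ξ → Ξ) (hg : Continuous g)
    (A : Set Ξ) (hA : IsClosed A) (ν : ℝ) (hν : 0 < ν)
    (hmeas : ∀ μ : Measure Ξ, IsProbabilityMeasure μ → MeasurePreserving g μ μ →
      μ A < ENNReal.ofReal ν) :
    ∀ ξ : Ξ, Filter.limsup
      (fun n : ℕ => (Set.ncard {k : ℕ | k < n ∧ g^[k] ξ ∈ A} : ℝ) / n)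
      Filter.atTop < ν :=
  visit_frequency_lt_general g hg A hA ν hmeas
end

section
/- Let ω be a non-periodic Toeplitz sequence over a finite alphabet with weak periodic structure (p_ℓ) and densities D(p) := #(Per(p,ω) ∩ [0,p−1])/p. If x, y ∈ Σ_ω have the same p_{ℓ+1}-skeleton (i.e. Per(p_{ℓ+1},x) = Per(p_{ℓ+1},y) and x_k = y_k for all k in this set), then limsup_{n→∞} (1/n)·#{0 ≤ k < n : x_k ≠ y_k} ≤ 1 − D(p_{ℓ+1}). -/
open Filter

/-- The left shift on one-sided sequences. -/
def shiftMap {A : Type*} (x : ℕ → A) : ℕ → A := fun k => x (k + 1)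

/-- `PerSet p x`: positions of `x` that are `p`-periodic towards the future. -/
def PerSet {A : Type*} (p : ℕ) (x : ℕ → A) : Set ℕ :=
  {k | ∀ ℓ : ℕ, 1 ≤ ℓ → x (k + p * ℓ) = x k}

/-- `D(p)`: relative density of the `p`-periodic positions of `ω` in `[0, p-1]`. -/
noncomputable def skelDensity {A : Type*} (p : ℕ) (ω : ℕ → A) : ℝ :=
  (Set.ncard (PerSet p ω ∩ Set.Iio p) : ℝ) / p

/-!
The point `x` is a limit of shifts `shiftMap^[n M] ω` agreeing with it on `[0, M)`. Infinitely many
of the `n M` share one residue mod `q`, so there is an `r` with `r + n M ≡ 0 [MOD q]` for all of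
them; since `Per(q, ω)` is stable under adding multiples of `q`, every `a ∈ Per(q, ω)` then gives
`a + r ∈ Per(q, x)`. Hence `Per(q, x)` has lower density at least `D(q)`, and `x`, `y` can only
differ outside `Per(q, x)`.
-/

namespace Nat

variable {P Q : ℕ → Prop} [DecidablePred P] [DecidablePred Q]

theorem count_add_count_not (n : ℕ) : count P n + count (fun k => ¬P k) n = n := by
  induction n with
  | zero => simp
  | succ n ih => simp only [count_succ]; split_ifs <;> omega

theorem count_le_count_add_of_imp {r : ℕ} (h : ∀ k, P k → Q (k + r)) (n : ℕ) :
    count P n ≤ count Q (r + n) := by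
  rw [count_add]
  exact (count_mono_left fun k _ hk => add_comm r k ▸ h k hk).trans (le_add_left _ _)

theorem mul_count_le_count_mul {q : ℕ} (hP : ∀ k, P k → P (k + q)) (m : ℕ) :
    m * count P q ≤ count P (q * m) := by
  induction m with
  | zero => simp
  | succ m ih =>
    calc (m + 1) * count P q = count P q + m * count P q := by ring
      _ ≤ count P q + count P (q * m) := by gcongr
      _ ≤ count P (q + q * m) := by
        rw [count_add]
        gcongr count P q + ?_
        exact count_mono_left fun k _ hk => add_comm k q ▸ hP k hk
      _ = count P (q * (m + 1)) := by ring_nf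

theorem ncard_setOf_lt_and (P : ℕ → Prop) [DecidablePred P] (n : ℕ) :
    {k | k < n ∧ P k}.ncard = count P n := by
  rw [count_eq_card_filter_range, ← Set.ncard_coe_finset]
  congr
  ext
  simp

end Nat

theorem Filter.limsup_le_of_eventually_le_add_div {u : ℕ → ℝ} (hu : ∀ N, 0 ≤ u N) {a b : ℝ}
    (h : ∀ᶠ N in atTop, u N ≤ a + b / N) : limsup u atTop ≤ a := by
  have hlim : Tendsto (fun N : ℕ => a + b / N) atTop (nhds a) := by
    simpa using tendsto_const_nhds.add (tendsto_const_div_atTop_nhds_zero_nat b)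
  calc limsup u atTop ≤ limsup (fun N : ℕ => a + b / N) atTop :=
        limsup_le_limsup h (isBoundedUnder_of ⟨0, hu⟩).isCoboundedUnder_le hlim.isBoundedUnder_le
    _ = a := hlim.limsup_eq

theorem limsup_count_div_le {P : ℕ → Prop} [DecidablePred P] {c q r : ℕ} (hq : 0 < q)
    (h : ∀ N, Nat.count P N + c * ((N - r) / q) ≤ N) :
    limsup (fun N : ℕ => (Nat.count P N : ℝ) / N) atTop ≤ 1 - c / q := by
  refine limsup_le_of_eventually_le_add_div (fun N => by positivity) ?_ (b := c * (r + q) / q)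
  filter_upwards [eventually_gt_atTop 0] with N hN
  have hblocks : N ≤ q * ((N - r) / q) + r + q := by
    have := Nat.div_add_mod (N - r) q
    have := Nat.mod_lt (N - r) hq
    omega
  set m := (N - r) / q
  have hqR : (0 : ℝ) < q := by exact_mod_cast hq
  have hNR : (0 : ℝ) < N := by exact_mod_cast hN
  have hcountR : (Nat.count P N : ℝ) + c * m ≤ N := by exact_mod_cast h N
  have hblocksR : (N : ℝ) ≤ q * m + r + q := by exact_mod_cast hblocks
  rw [div_le_iff₀ hNR]
  calc (Nat.count P N : ℝ) ≤ N - c * m := by linarith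
    _ ≤ N - c * (N - r - q) / q := by
      gcongr
      rw [div_le_iff₀ hqR, mul_assoc]
      gcongr
      linarith
    _ = (1 - c / q + c * (r + q) / q / N) * N := by field_simp; ring

section Sequences

variable {A : Type*}

theorem shiftMap_iterate_apply (ω : ℕ → A) (n k : ℕ) : shiftMap^[n] ω k = ω (k + n) := by
  induction n generalizing ω with
  | zero => rfl
  | succ n ih => rw [Function.iterate_succ_apply, ih (shiftMap ω)]; rfl

theorem add_mul_mem_perSet {q k : ℕ} {x : ℕ → A} (h : k ∈ PerSet q x) (j : ℕ) :
    k + q * j ∈ PerSet q x := by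
  intro ℓ hℓ
  rcases j.eq_zero_or_pos with rfl | hj
  · simpa using h ℓ hℓ
  · rw [show k + q * j + q * ℓ = k + q * (j + ℓ) by ring, h _ (by omega), h j hj]

theorem exists_eq_shift_of_mem_closure [TopologicalSpace A] [DiscreteTopology A]
    {ω x : ℕ → A} (hx : x ∈ closure (Set.range fun n : ℕ => shiftMap^[n] ω)) (M : ℕ) :
    ∃ n, ∀ k < M, x k = ω (k + n) := by
  have hopen : IsOpen ((Set.Iio M).pi fun k => {x k}) :=
    isOpen_set_pi (Set.finite_Iio M) fun _ _ => isOpen_discrete _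
  obtain ⟨_, hz, n, rfl⟩ := mem_closure_iff.mp hx _ hopen fun _ _ => rfl
  exact ⟨n, fun k hk => (hz k hk).symm.trans (shiftMap_iterate_apply ω n k)⟩

theorem exists_add_mem_perSet_of_mem_closure [TopologicalSpace A] [DiscreteTopology A]
    {ω x : ℕ → A} {q : ℕ} (hq : 0 < q)
    (hx : x ∈ closure (Set.range fun n : ℕ => shiftMap^[n] ω)) :
    ∃ r, ∀ a ∈ PerSet q ω, a + r ∈ PerSet q x := by
  choose n hn using exists_eq_shift_of_mem_closure hx
  obtain ⟨s, hs⟩ := Finite.exists_infinite_fiber fun M => (⟨n M % q, Nat.mod_lt _ hq⟩ : Fin q)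
  refine ⟨q - s, fun a ha ℓ hℓ => ?_⟩
  obtain ⟨M, hM, hlt⟩ := (Set.infinite_coe_iff.mp hs).exists_gt (a + (q - s) + q * ℓ)
  have hres : n M % q = s := congrArg Fin.val hM
  have hidx : a + (q - s) + n M = a + q * (n M / q + 1) := by
    have := Nat.div_add_mod (n M) q
    have := s.isLt
    rw [mul_add]
    omega
  rw [hn M _ hlt, hn M _ (by omega), add_right_comm, hidx]
  exact add_mul_mem_perSet ha _ ℓ hℓ

theorem skelDensity_eq_count_div (q : ℕ) (ω : ℕ → A) [DecidablePred (· ∈ PerSet q ω)] :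
    skelDensity q ω = Nat.count (· ∈ PerSet q ω) q / q := by
  rw [skelDensity, Set.inter_comm, ← Nat.ncard_setOf_lt_and]
  rfl

theorem exists_mul_count_perSet_le_of_mem_closure [TopologicalSpace A] [DiscreteTopology A]
    {ω x : ℕ → A} {q : ℕ} [DecidablePred (· ∈ PerSet q ω)] [DecidablePred (· ∈ PerSet q x)]
    (hq : 0 < q) (hx : x ∈ closure (Set.range fun n : ℕ => shiftMap^[n] ω)) :
    ∃ r, ∀ N, Nat.count (· ∈ PerSet q ω) q * ((N - r) / q) ≤ Nat.count (· ∈ PerSet q x) N := by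
  obtain ⟨r, hr⟩ := exists_add_mem_perSet_of_mem_closure hq hx
  refine ⟨r, fun N => ?_⟩
  rcases lt_or_ge N r with hN | hN
  · simp [Nat.sub_eq_zero_of_le hN.le]
  calc Nat.count (· ∈ PerSet q ω) q * ((N - r) / q)
      = (N - r) / q * Nat.count (· ∈ PerSet q ω) q := mul_comm _ _
    _ ≤ Nat.count (· ∈ PerSet q ω) (q * ((N - r) / q)) :=
      Nat.mul_count_le_count_mul (fun k hk => by simpa using add_mul_mem_perSet hk 1) _
    _ ≤ Nat.count (· ∈ PerSet q ω) (N - r) := Nat.count_monotone _ (Nat.mul_div_le _ _)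
    _ ≤ Nat.count (· ∈ PerSet q x) (r + (N - r)) := Nat.count_le_count_add_of_imp hr _
    _ = Nat.count (· ∈ PerSet q x) N := by rw [Nat.add_sub_cancel' hN]

end Sequences

theorem toeplitz_same_skeleton_density_general {A : Type*}
    [TopologicalSpace A] [DiscreteTopology A]
    (ω : ℕ → A)
    (p : ℕ → ℕ) (hpos : ∀ ℓ, 0 < p ℓ)
    (ℓ : ℕ) (x y : ℕ → A)
    (hx : x ∈ closure (Set.range fun n : ℕ => shiftMap^[n] ω))
    (hskel₂ : ∀ k ∈ PerSet (p (ℓ + 1)) x, x k = y k) :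
    Filter.limsup
      (fun n : ℕ => (Set.ncard {k : ℕ | k < n ∧ x k ≠ y k} : ℝ) / n)
      Filter.atTop ≤ 1 - skelDensity (p (ℓ + 1)) ω := by
  classical
  set q := p (ℓ + 1)
  obtain ⟨r, hr⟩ := exists_mul_count_perSet_le_of_mem_closure (hpos (ℓ + 1)) hx
  have hdiff : ∀ N, Nat.count (fun k => x k ≠ y k) N
      + Nat.count (· ∈ PerSet q ω) q * ((N - r) / q) ≤ N := fun N =>
    calc _ ≤ Nat.count (· ∉ PerSet q x) N + Nat.count (· ∈ PerSet q x) N :=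
          add_le_add (Nat.count_mono_left fun k _ hne hk => hne (hskel₂ k hk)) (hr N)
      _ = N := by rw [add_comm, Nat.count_add_count_not]
  simp_rw [Nat.ncard_setOf_lt_and, skelDensity_eq_count_div]
  exact limsup_count_div_le (hpos _) hdiff

/-- if `ω` is a non-periodic Toeplitz sequence with weak periodic
structure `(p_ℓ)` and `x, y` in the shift orbit closure of `ω` have the same
`p_{ℓ+1}`-skeleton, then the upper density of `{k : x_k ≠ y_k}` is at most
`1 − D(p_{ℓ+1})`. -/
theorem toeplitz_same_skeleton_density {A : Type*} [Fintype A]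
    [TopologicalSpace A] [DiscreteTopology A]
    (ω : ℕ → A)
    (htoe : ∀ k : ℕ, ∃ p : ℕ, 0 < p ∧ k ∈ PerSet p ω)
    (hnp : ¬ ∃ p : ℕ, 0 < p ∧ ∀ k : ℕ, ω (k + p) = ω k)
    (p : ℕ → ℕ) (hpos : ∀ ℓ, 0 < p ℓ) (hdvd : ∀ ℓ, p ℓ ∣ p (ℓ + 1))
    (hcover : ∀ k : ℕ, ∃ ℓ : ℕ, k ∈ PerSet (p ℓ) ω)
    (ℓ : ℕ) (x y : ℕ → A)
    (hx : x ∈ closure (Set.range fun n : ℕ => shiftMap^[n] ω))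
    (hy : y ∈ closure (Set.range fun n : ℕ => shiftMap^[n] ω))
    (hskel₁ : PerSet (p (ℓ + 1)) x = PerSet (p (ℓ + 1)) y)
    (hskel₂ : ∀ k ∈ PerSet (p (ℓ + 1)) x, x k = y k) :
    Filter.limsup
      (fun n : ℕ => (Set.ncard {k : ℕ | k < n ∧ x k ≠ y k} : ℝ) / n)
      Filter.atTop ≤ 1 - skelDensity (p (ℓ + 1)) ω :=
  toeplitz_same_skeleton_density_general ω p hpos ℓ x y hx hskel₂
end

section
/- Let Ξ be a compact metric space, g: Ξ → Ξ a minimal isometry with unique invariant Borel probability measure μ. Then for every ξ ∈ Ξ: limsup_{ε→0} log μ(B_ε(ξ)) / log ε equals the upper box dimension of Ξ, and the analogous statement holds for the liminf and the lower box dimension. In particular μ(B_ε(ξ)) does not depend on ξ. -/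
open MeasureTheory Metric Filter

/-- `M_ε(Ξ)`: maximal cardinality of an `ε`-separated subset of `Ξ`. -/
noncomputable def sepCard (Ξ : Type*) [MetricSpace Ξ] (ε : ℝ) : ℕ :=
  sSup {n : ℕ | ∃ S : Finset Ξ, S.card = n ∧ ∀ x ∈ S, ∀ y ∈ S, x ≠ y → ε ≤ dist x y}

/-- upper/lower box dimension quantity `log M_ε / (−log ε)` as `ε → 0⁺`; the upper box
dimension is its `limsup`, the lower one its `liminf`. -/
noncomputable def boxQuot (Ξ : Type*) [MetricSpace Ξ] (ε : ℝ) : ℝ :=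
  Real.log (sepCard Ξ ε) / (-Real.log ε)

/-! The map `x ↦ μ (ball x ε)` is lower semicontinuous and constant along orbits of the
isometry, so minimality makes it constant, equal to `m(ε)` say. For a maximal `ε`-separated set
the `ε`-balls cover the space and the `ε/2`-balls are disjoint, whence `1 ≤ M_ε m(ε)` and
`M_{2ε} m(ε) ≤ 1`, i.e. `log M_{2ε} / (-log ε) ≤ log m(ε) / log ε ≤ log M_ε / (-log ε)`.
Since `log (2ε) / log ε → 1` and `ε ↦ 2ε` preserves `𝓝[>] 0`, the limsups and liminfs agree. -/

open scoped ENNReal NNReal Topology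

namespace Real

variable {α : Type*} {l : Filter α} {u : α → ℝ}

-- Unbounded real `limsup`s and `liminf`s take the junk value `0`, matching `ENNReal.toReal ⊤`.

theorem limsup_eq_toReal_limsup_ofReal (hu : 0 ≤ᶠ[l] u) :
    limsup u l = (limsup (fun x ↦ ENNReal.ofReal (u x)) l).toReal := by
  set v : α → ℝ≥0 := fun x ↦ (u x).toNNReal
  have huv : limsup u l = limsup (fun x ↦ (v x : ℝ)) l :=
    limsup_congr (hu.mono fun x hx ↦ (coe_toNNReal _ hx).symm)
  rw [huv, NNReal.toReal_limsup]
  by_cases hv : IsBoundedUnder (· ≤ ·) l v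
  · rw [← ENNReal.coe_toReal, ENNReal.ofNNReal_limsup hv]
    rfl
  · have htop : limsup (fun x ↦ (v x : ℝ≥0∞)) l = ⊤ := by
      refine ENNReal.eq_top_of_forall_nnreal_le fun r ↦ le_limsup_of_frequently_le ?_
      by_contra h
      exact hv (isBoundedUnder_of_eventually_le (a := r)
        ((not_frequently.1 h).mono fun x hx ↦ by exact_mod_cast (not_le.1 hx).le))
    rw [NNReal.limsup_of_not_isBoundedUnder hv]
    exact (congrArg ENNReal.toReal htop).symm

theorem liminf_eq_toReal_liminf_ofReal (hu : 0 ≤ᶠ[l] u) :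
    liminf u l = (liminf (fun x ↦ ENNReal.ofReal (u x)) l).toReal := by
  set v : α → ℝ≥0 := fun x ↦ (u x).toNNReal
  have huv : liminf u l = liminf (fun x ↦ (v x : ℝ)) l :=
    liminf_congr (hu.mono fun x hx ↦ (coe_toNNReal _ hx).symm)
  rw [huv, NNReal.toReal_liminf]
  by_cases hv : IsCoboundedUnder (· ≥ ·) l v
  · rw [← ENNReal.coe_toReal, ENNReal.ofNNReal_liminf hv]
    rfl
  · have htop : liminf (fun x ↦ (v x : ℝ≥0∞)) l = ⊤ := by
      refine ENNReal.eq_top_of_forall_nnreal_le fun r ↦ ?_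
      obtain ⟨a, hav, hra⟩ : ∃ a, (∀ᶠ x in l, a ≤ v x) ∧ r < a := by
        by_contra! h
        exact hv ⟨r, fun a ha ↦ h a (by simpa using ha)⟩
      exact le_liminf_of_le (by isBoundedDefault)
        (hav.mono fun x hx ↦ by exact_mod_cast hra.le.trans hx)
    rw [NNReal.liminf_of_not_isCoboundedUnder hv]
    exact (congrArg ENNReal.toReal htop).symm

end Real

section Sandwich

variable {α : Type*} {l : Filter α} {φ : α → α}

theorem ENNReal.limsup_eq_of_le_of_forall_lt_one_mul_le {f b : α → ℝ≥0∞} (hφ : map φ l = l)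
    (hfb : f ≤ᶠ[l] b) (hbf : ∀ t < 1, ∀ᶠ x in l, t * b (φ x) ≤ f x) :
    limsup f l = limsup b l := by
  refine le_antisymm (limsup_le_limsup hfb) (ENNReal.le_of_forall_lt_one_mul_le fun t ht ↦ ?_)
  calc t * limsup b l = t * limsup b (map φ l) := by rw [hφ]
    _ = limsup (fun x ↦ t * b (φ x)) l := by
        rw [ENNReal.limsup_const_mul_of_ne_top ht.ne_top]; rfl
    _ ≤ limsup f l := limsup_le_limsup (hbf t ht)

theorem ENNReal.liminf_eq_of_le_of_forall_lt_one_mul_le [NeBot l] {f b : α → ℝ≥0∞}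
    (hφ : map φ l = l) (hfb : f ≤ᶠ[l] b) (hbf : ∀ t < 1, ∀ᶠ x in l, t * b (φ x) ≤ f x) :
    liminf f l = liminf b l := by
  refine le_antisymm (liminf_le_liminf hfb) (ENNReal.le_of_forall_lt_one_mul_le fun t ht ↦ ?_)
  calc t * liminf b l = t * liminf b (map φ l) := by rw [hφ]
    _ = liminf (fun x ↦ t * b (φ x)) l := by
        rw [ENNReal.liminf_const_mul_of_ne_top ht.ne_top]; rfl
    _ ≤ liminf f l := liminf_le_liminf (hbf t ht)

theorem forall_lt_one_mul_ofReal_le_ofReal {f g : α → ℝ}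
    (h : ∀ t < 1, ∀ᶠ x in l, t * g x ≤ f x) :
    ∀ t < 1, ∀ᶠ x in l, t * ENNReal.ofReal (g x) ≤ ENNReal.ofReal (f x) := by
  intro t ht
  filter_upwards [h t.toReal (ENNReal.toReal_lt_of_lt_ofReal (by simpa using ht))] with x hx
  rw [← ENNReal.ofReal_toReal ht.ne_top, ← ENNReal.ofReal_mul ENNReal.toReal_nonneg]
  exact ENNReal.ofReal_le_ofReal hx

theorem Real.limsup_eq_of_le_of_forall_lt_one_mul_le {f b : α → ℝ} (hφ : map φ l = l)
    (hf : 0 ≤ᶠ[l] f) (hfb : f ≤ᶠ[l] b) (hbf : ∀ t < 1, ∀ᶠ x in l, t * b (φ x) ≤ f x) :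
    limsup f l = limsup b l := by
  have hb : 0 ≤ᶠ[l] b := hf.trans hfb
  rw [Real.limsup_eq_toReal_limsup_ofReal hf, Real.limsup_eq_toReal_limsup_ofReal hb,
    ENNReal.limsup_eq_of_le_of_forall_lt_one_mul_le hφ
      (hfb.mono fun _ hx ↦ ENNReal.ofReal_le_ofReal hx) (forall_lt_one_mul_ofReal_le_ofReal hbf)]

theorem Real.liminf_eq_of_le_of_forall_lt_one_mul_le [NeBot l] {f b : α → ℝ} (hφ : map φ l = l)
    (hf : 0 ≤ᶠ[l] f) (hfb : f ≤ᶠ[l] b) (hbf : ∀ t < 1, ∀ᶠ x in l, t * b (φ x) ≤ f x) :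
    liminf f l = liminf b l := by
  have hb : 0 ≤ᶠ[l] b := hf.trans hfb
  rw [Real.liminf_eq_toReal_liminf_ofReal hf, Real.liminf_eq_toReal_liminf_ofReal hb,
    ENNReal.liminf_eq_of_le_of_forall_lt_one_mul_le hφ
      (hfb.mono fun _ hx ↦ ENNReal.ofReal_le_ofReal hx) (forall_lt_one_mul_ofReal_le_ofReal hbf)]

end Sandwich

theorem map_mul_left_nhdsGT_zero {𝕜 : Type*} [Field 𝕜] [LinearOrder 𝕜] [IsStrictOrderedRing 𝕜]
    [TopologicalSpace 𝕜] [OrderTopology 𝕜] {c : 𝕜} (hc : 0 < c) :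
    map (c * ·) (𝓝[>] 0) = 𝓝[>] 0 := by
  conv_lhs => rw [← comap_mulLeft_nhdsGT_zero hc]
  exact map_comap_of_surjective (mul_left_surjective₀ hc.ne') _

theorem eventually_mul_neg_log_le_neg_log_mul {c t : ℝ} (hc : 0 < c) (ht : t < 1) :
    ∀ᶠ ε in 𝓝[>] 0, t * -Real.log ε ≤ -Real.log (c * ε) := by
  filter_upwards [self_mem_nhdsWithin,
    Real.tendsto_log_nhdsGT_zero.eventually_le_atBot (-Real.log c / (1 - t))] with ε hε hlog
  rw [Real.log_mul hc.ne' (ne_of_gt hε)]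
  have := (le_div_iff₀ (sub_pos.2 ht)).1 hlog
  linarith

section BallMeasure

variable {X : Type*} [PseudoMetricSpace X] [MeasurableSpace X] {μ : Measure X}

theorem exists_lt_measure_ball_of_lt {x : X} {r : ℝ} {c : ℝ≥0∞} (hc : c < μ (ball x r)) :
    ∃ r' < r, c < μ (ball x r') := by
  obtain ⟨u, hu_mono, hu_lt, hu_lim⟩ := exists_seq_strictMono_tendsto r
  have hball : ball x r = ⋃ n, ball x (u n) := by
    refine subset_antisymm (fun z hz ↦ ?_) (Set.iUnion_subset fun n ↦ ball_subset_ball (hu_lt n).le)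
    obtain ⟨n, hn⟩ := (hu_lim.eventually (lt_mem_nhds (mem_ball.1 hz))).exists
    exact Set.mem_iUnion.2 ⟨n, hn⟩
  have hmono : Monotone fun n ↦ ball x (u n) := fun m n hmn ↦
    ball_subset_ball (hu_mono.monotone hmn)
  rw [hball, hmono.measure_iUnion, lt_iSup_iff] at hc
  obtain ⟨n, hn⟩ := hc
  exact ⟨u n, hu_lt n, hn⟩

theorem lowerSemicontinuous_measure_ball (r : ℝ) :
    LowerSemicontinuous fun x : X ↦ μ (ball x r) := by
  intro x c hc
  obtain ⟨r', hr', hcr'⟩ := exists_lt_measure_ball_of_lt hc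
  filter_upwards [ball_mem_nhds x (sub_pos.2 hr')] with y hy
  exact hcr'.trans_le (measure_mono (ball_subset_ball' (by linarith [mem_ball'.1 hy])))

variable [OpensMeasurableSpace X] {g : X → X}

theorem Isometry.measure_ball_iterate (hg : Isometry g) (hμ : MeasurePreserving g μ μ)
    (x : X) (r : ℝ) (n : ℕ) : μ (ball (g^[n] x) r) = μ (ball x r) := by
  induction n with
  | zero => rfl
  | succ n ih =>
    rw [Function.iterate_succ_apply', ← hμ.measure_preimage measurableSet_ball.nullMeasurableSet,
      hg.preimage_ball, ih]

theorem measure_ball_eq_of_isometry_of_dense_orbits (hg : Isometry g)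
    (hμ : MeasurePreserving g μ μ) (hdense : ∀ x : X, Dense (Set.range fun n : ℕ ↦ g^[n] x))
    (x y : X) (r : ℝ) : μ (ball x r) = μ (ball y r) := by
  have key : ∀ x y : X, μ (ball y r) ≤ μ (ball x r) := fun x y ↦
    (((lowerSemicontinuous_measure_ball r).isClosed_preimage (μ (ball x r))).closure_subset_iff.2
      (Set.range_subset_iff.2 fun n ↦ (hg.measure_ball_iterate hμ x r n).le)) (hdense x y)
  exact le_antisymm (key y x) (key x y)

end BallMeasure

section Separated

variable {X : Type*} [MetricSpace X] {ε : ℝ}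

theorem sepCard_eq_sSup : sepCard X ε =
    sSup {n | ∃ S : Finset X, S.card = n ∧ (S : Set X).Pairwise fun x y ↦ ε ≤ dist x y} :=
  rfl

theorem exists_card_eq_sepCard (hε : 0 < ε) {N : ℕ}
    (hN : ∀ S : Finset X, (S : Set X).Pairwise (fun x y ↦ ε ≤ dist x y) → S.card ≤ N) :
    ∃ S : Finset X, S.card = sepCard X ε ∧ (S : Set X).Pairwise (fun x y ↦ ε ≤ dist x y) ∧
      ∀ z, ∃ x ∈ S, dist z x < ε := by
  classical
  rw [sepCard_eq_sSup]
  set A := {n | ∃ S : Finset X, S.card = n ∧ (S : Set X).Pairwise fun x y ↦ ε ≤ dist x y}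
  have hbdd : BddAbove A := ⟨N, by rintro _ ⟨S, rfl, hS⟩; exact hN S hS⟩
  obtain ⟨S, hcard, hS⟩ := Nat.sSup_mem (s := A) ⟨0, ∅, rfl, by simp⟩ hbdd
  refine ⟨S, hcard, hS, fun z ↦ ?_⟩
  by_contra! hfar
  have hz : z ∉ S := fun hz ↦ (hfar z hz).not_gt (by simpa using hε)
  have hinsert : (insert z S).card ∈ A := by
    refine ⟨insert z S, rfl, ?_⟩
    rw [Finset.coe_insert]
    exact hS.insert fun x hx _ ↦ ⟨hfar x hx, dist_comm z x ▸ hfar x hx⟩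
  have hle := le_csSup hbdd hinsert
  rw [Finset.card_insert_of_notMem hz, ← hcard] at hle
  omega

variable [MeasurableSpace X] {μ : Measure X}

theorem measure_univ_le_card_mul_measure_ball (hμ : ∀ x y : X, μ (ball x ε) = μ (ball y ε))
    {S : Finset X} (hS : ∀ z, ∃ x ∈ S, dist z x < ε) (x : X) :
    μ Set.univ ≤ S.card * μ (ball x ε) :=
  calc μ Set.univ ≤ μ (⋃ y ∈ S, ball y ε) := measure_mono fun z _ ↦ by
        obtain ⟨y, hy, hzy⟩ := hS z
        exact Set.mem_biUnion hy hzy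
    _ ≤ ∑ y ∈ S, μ (ball y ε) := measure_biUnion_finset_le S _
    _ = S.card * μ (ball x ε) := by simp [hμ _ x]

theorem measure_ball_pos_of_forall_measure_ball_eq [CompactSpace X] [NeZero μ] {r : ℝ}
    (hμ : ∀ x y : X, μ (ball x r) = μ (ball y r)) (hr : 0 < r) (x : X) : 0 < μ (ball x r) := by
  refine pos_iff_ne_zero.2 fun h0 ↦ NeZero.ne μ (Measure.measure_univ_eq_zero.1 ?_)
  obtain ⟨t, -, ht, hcover⟩ := finite_cover_balls_of_compact (isCompact_univ (X := X)) hr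
  exact measure_mono_null hcover
    ((measure_biUnion_null_iff ht.countable).2 fun y _ ↦ (hμ y x).trans h0)

variable [OpensMeasurableSpace X]

theorem card_mul_measure_ball_half_le (hμ : ∀ x y : X, μ (ball x (ε / 2)) = μ (ball y (ε / 2)))
    {S : Finset X} (hS : (S : Set X).Pairwise fun x y ↦ ε ≤ dist x y) (x : X) :
    S.card * μ (ball x (ε / 2)) ≤ μ Set.univ :=
  calc S.card * μ (ball x (ε / 2)) = ∑ y ∈ S, μ (ball y (ε / 2)) := by simp [hμ _ x]
    _ = μ (⋃ y ∈ S, ball y (ε / 2)) :=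
      (measure_biUnion_finset (hS.mono' fun _ _ h ↦ ball_disjoint_ball (by linarith))
        fun _ _ ↦ measurableSet_ball).symm
    _ ≤ μ Set.univ := measure_mono (Set.subset_univ _)

theorem card_le_ceil_of_pairwise_le_dist [IsFiniteMeasure μ]
    (hμ : ∀ x y : X, μ (ball x (ε / 2)) = μ (ball y (ε / 2))) {x : X}
    (hx : 0 < μ (ball x (ε / 2))) {S : Finset X}
    (hS : (S : Set X).Pairwise fun x y ↦ ε ≤ dist x y) :
    S.card ≤ ⌈(μ Set.univ / μ (ball x (ε / 2))).toReal⌉₊ := by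
  have hle : (S.card : ℝ≥0∞) ≤ μ Set.univ / μ (ball x (ε / 2)) :=
    (ENNReal.le_div_iff_mul_le (Or.inl hx.ne') (Or.inl (measure_ne_top μ _))).2
      (card_mul_measure_ball_half_le hμ hS x)
  have hle' : (S.card : ℝ) ≤ (μ Set.univ / μ (ball x (ε / 2))).toReal := by
    simpa using ENNReal.toReal_mono (ENNReal.div_ne_top (measure_ne_top μ _) hx.ne') hle
  exact_mod_cast hle'.trans (Nat.le_ceil _)

theorem exists_card_eq_sepCard_of_forall_measure_ball_eq [CompactSpace X] [IsFiniteMeasure μ]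
    [NeZero μ] (hμ : ∀ x y : X, ∀ r, μ (ball x r) = μ (ball y r)) (hε : 0 < ε) (x : X) :
    ∃ S : Finset X, S.card = sepCard X ε ∧ (S : Set X).Pairwise (fun x y ↦ ε ≤ dist x y) ∧
      ∀ z, ∃ x ∈ S, dist z x < ε :=
  exists_card_eq_sepCard hε fun _ hS ↦
    card_le_ceil_of_pairwise_le_dist (hμ · · _)
      (measure_ball_pos_of_forall_measure_ball_eq (hμ · · _) (half_pos hε) x) hS

variable [CompactSpace X] [IsProbabilityMeasure μ]

theorem one_le_sepCard_mul_measure_ball (hμ : ∀ x y : X, ∀ r, μ (ball x r) = μ (ball y r))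
    (hε : 0 < ε) (x : X) : 1 ≤ sepCard X ε * μ (ball x ε) := by
  obtain ⟨S, hcard, -, hcover⟩ := exists_card_eq_sepCard_of_forall_measure_ball_eq hμ hε x
  simpa [hcard] using measure_univ_le_card_mul_measure_ball (hμ · · ε) hcover x

theorem sepCard_mul_measure_ball_half_le_one (hμ : ∀ x y : X, ∀ r, μ (ball x r) = μ (ball y r))
    (hε : 0 < ε) (x : X) : sepCard X ε * μ (ball x (ε / 2)) ≤ 1 := by
  obtain ⟨S, hcard, hS, -⟩ := exists_card_eq_sepCard_of_forall_measure_ball_eq hμ hε x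
  simpa [hcard] using card_mul_measure_ball_half_le (hμ · · _) hS x

end Separated

section ScalingExponent

variable {X : Type*} [MetricSpace X] [MeasurableSpace X] {μ : Measure X} [IsProbabilityMeasure μ]
  {x : X} {ε : ℝ}

theorem log_measure_ball_div_log_nonneg (hε₀ : 0 < ε) (hε₁ : ε < 1) :
    0 ≤ Real.log (μ (ball x ε)).toReal / Real.log ε :=
  div_nonneg_of_nonpos (Real.log_nonpos ENNReal.toReal_nonneg
    (by simpa using ENNReal.toReal_mono ENNReal.one_ne_top prob_le_one)) (Real.log_neg hε₀ hε₁).le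

variable [CompactSpace X] (hμ : ∀ x y : X, ∀ r, μ (ball x r) = μ (ball y r))
include hμ

theorem toReal_measure_ball_pos (hε : 0 < ε) : 0 < (μ (ball x ε)).toReal :=
  ENNReal.toReal_pos (measure_ball_pos_of_forall_measure_ball_eq (hμ · · ε) hε x).ne'
    (measure_ne_top μ _)

variable [OpensMeasurableSpace X]

theorem log_measure_ball_div_log_le_boxQuot (hε₀ : 0 < ε) (hε₁ : ε < 1) :
    Real.log (μ (ball x ε)).toReal / Real.log ε ≤ boxQuot X ε := by
  have hp := toReal_measure_ball_pos hμ (x := x) hε₀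
  have h : (1 : ℝ) ≤ sepCard X ε * (μ (ball x ε)).toReal := by
    simpa using ENNReal.toReal_mono (by finiteness) (one_le_sepCard_mul_measure_ball hμ hε₀ x)
  have hM : (0 : ℝ) < sepCard X ε := (mul_pos_iff_of_pos_right hp).1 (by linarith)
  have hlog : 0 ≤ Real.log (sepCard X ε) + Real.log (μ (ball x ε)).toReal := by
    rw [← Real.log_mul hM.ne' hp.ne']
    exact Real.log_nonneg h
  rw [boxQuot, div_neg, ← neg_div]
  exact div_le_div_of_nonpos_of_le (Real.log_neg hε₀ hε₁).le (by linarith)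

theorem log_sepCard_two_mul_div_le (hε₀ : 0 < ε) (hε₁ : ε < 1) :
    Real.log (sepCard X (2 * ε)) / -Real.log ε ≤ Real.log (μ (ball x ε)).toReal / Real.log ε := by
  have hp := toReal_measure_ball_pos hμ (x := x) hε₀
  have h2ε : 0 < 2 * ε := by positivity
  have h := sepCard_mul_measure_ball_half_le_one hμ h2ε x
  rw [mul_div_cancel_left₀ ε two_ne_zero] at h
  have h : (sepCard X (2 * ε) : ℝ) * (μ (ball x ε)).toReal ≤ 1 := by
    simpa using ENNReal.toReal_mono ENNReal.one_ne_top h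
  have hM : (0 : ℝ) < sepCard X (2 * ε) := by
    have := one_le_sepCard_mul_measure_ball hμ h2ε x
    exact_mod_cast Nat.pos_of_ne_zero fun h0 ↦ by simp [h0] at this
  have hlog : Real.log (sepCard X (2 * ε)) + Real.log (μ (ball x ε)).toReal ≤ 0 := by
    rw [← Real.log_mul hM.ne' hp.ne']
    exact Real.log_nonpos (by positivity) h
  rw [div_neg, ← neg_div]
  exact div_le_div_of_nonpos_of_le (Real.log_neg hε₀ hε₁).le (by linarith)

theorem eventually_mul_boxQuot_two_mul_le {t : ℝ} (ht : t < 1) :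
    ∀ᶠ ε in 𝓝[>] 0, t * boxQuot X (2 * ε) ≤ Real.log (μ (ball x ε)).toReal / Real.log ε := by
  filter_upwards [Ioo_mem_nhdsGT (by norm_num : (0 : ℝ) < 1 / 2),
    eventually_mul_neg_log_le_neg_log_mul two_pos ht] with ε ⟨hε₀, hε₁⟩ hlog
  have hA : 0 < -Real.log (2 * ε) := neg_pos.2 (Real.log_neg (by positivity) (by linarith))
  have hB : 0 < -Real.log ε := neg_pos.2 (Real.log_neg hε₀ (by linarith))
  have hL : 0 ≤ Real.log (sepCard X (2 * ε)) := Real.log_natCast_nonneg _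
  calc t * boxQuot X (2 * ε)
      ≤ (-Real.log (2 * ε) / -Real.log ε) * boxQuot X (2 * ε) :=
        mul_le_mul_of_nonneg_right ((le_div_iff₀ hB).2 hlog) (div_nonneg hL hA.le)
    _ = Real.log (sepCard X (2 * ε)) / -Real.log ε := by
        rw [boxQuot, div_mul_div_comm, mul_comm (-Real.log (2 * ε)), mul_div_mul_right _ _ hA.ne']
    _ ≤ _ := log_sepCard_two_mul_div_le hμ hε₀ (by linarith)

end ScalingExponent

theorem ball_measure_scaling_eq_box_dimension_general {Ξ : Type*} [MetricSpace Ξ]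
    [CompactSpace Ξ] [MeasurableSpace Ξ] [BorelSpace Ξ]
    (g : Ξ → Ξ) (hiso : Isometry g)
    (hmin : ∀ ξ : Ξ, Dense (Set.range fun n : ℕ => g^[n] ξ))
    (μ : Measure Ξ) [IsProbabilityMeasure μ] (hinv : MeasurePreserving g μ μ) :
    (∀ ξ ξ' : Ξ, ∀ ε : ℝ, μ (Metric.ball ξ ε) = μ (Metric.ball ξ' ε)) ∧
    (∀ ξ : Ξ,
      Filter.limsup (fun ε : ℝ => Real.log (μ (Metric.ball ξ ε)).toReal / Real.log ε)
          (nhdsWithin 0 (Set.Ioi 0)) =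
        Filter.limsup (fun ε : ℝ => boxQuot Ξ ε) (nhdsWithin 0 (Set.Ioi 0))) ∧
    (∀ ξ : Ξ,
      Filter.liminf (fun ε : ℝ => Real.log (μ (Metric.ball ξ ε)).toReal / Real.log ε)
          (nhdsWithin 0 (Set.Ioi 0)) =
        Filter.liminf (fun ε : ℝ => boxQuot Ξ ε) (nhdsWithin 0 (Set.Ioi 0))) := by
  have hμ := measure_ball_eq_of_isometry_of_dense_orbits hiso hinv hmin
  have hφ : map (2 * ·) (𝓝[>] (0 : ℝ)) = 𝓝[>] 0 := map_mul_left_nhdsGT_zero two_pos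
  have hsmall : ∀ᶠ ε in 𝓝[>] (0 : ℝ), ε ∈ Set.Ioo 0 1 := Ioo_mem_nhdsGT one_pos
  refine ⟨hμ, fun ξ ↦ ?_, fun ξ ↦ ?_⟩
  · exact Real.limsup_eq_of_le_of_forall_lt_one_mul_le hφ
      (hsmall.mono fun ε hε ↦ log_measure_ball_div_log_nonneg hε.1 hε.2)
      (hsmall.mono fun ε hε ↦ log_measure_ball_div_log_le_boxQuot hμ hε.1 hε.2)
      fun t ht ↦ eventually_mul_boxQuot_two_mul_le hμ ht
  · exact Real.liminf_eq_of_le_of_forall_lt_one_mul_le hφ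
      (hsmall.mono fun ε hε ↦ log_measure_ball_div_log_nonneg hε.1 hε.2)
      (hsmall.mono fun ε hε ↦ log_measure_ball_div_log_le_boxQuot hμ hε.1 hε.2)
      fun t ht ↦ eventually_mul_boxQuot_two_mul_le hμ ht

/-- for a minimal isometry `g` of a compact metric space with unique
invariant Borel probability measure `μ`, the measure of `ε`-balls is independent of the
centre, and the scaling exponents `limsup/liminf_{ε→0} log μ(B_ε(ξ)) / log ε` equal the
upper/lower box dimension of `Ξ`. -/
theorem ball_measure_scaling_eq_box_dimension {Ξ : Type*} [MetricSpace Ξ]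
    [CompactSpace Ξ] [Nonempty Ξ] [MeasurableSpace Ξ] [BorelSpace Ξ]
    (g : Ξ → Ξ) (hiso : Isometry g)
    (hmin : ∀ ξ : Ξ, Dense (Set.range fun n : ℕ => g^[n] ξ))
    (μ : Measure Ξ) [IsProbabilityMeasure μ] (hinv : MeasurePreserving g μ μ)
    (huniq : ∀ ν : Measure Ξ, IsProbabilityMeasure ν → MeasurePreserving g ν ν → ν = μ) :
    (∀ ξ ξ' : Ξ, ∀ ε : ℝ, μ (Metric.ball ξ ε) = μ (Metric.ball ξ' ε)) ∧
    (∀ ξ : Ξ,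
      Filter.limsup (fun ε : ℝ => Real.log (μ (Metric.ball ξ ε)).toReal / Real.log ε)
          (nhdsWithin 0 (Set.Ioi 0)) =
        Filter.limsup (fun ε : ℝ => boxQuot Ξ ε) (nhdsWithin 0 (Set.Ioi 0))) ∧
    (∀ ξ : Ξ,
      Filter.liminf (fun ε : ℝ => Real.log (μ (Metric.ball ξ ε)).toReal / Real.log ε)
          (nhdsWithin 0 (Set.Ioi 0)) =
        Filter.liminf (fun ε : ℝ => boxQuot Ξ ε) (nhdsWithin 0 (Set.Ioi 0))) :=
  ball_measure_scaling_eq_box_dimension_general g hiso hmin μ hinv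
end
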